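/- Let 0 < p < 1 and α, β₁, β₂, β₃ > 0. Let V₁, V₂, V₃ be independent ℕ-valued random variables with P(Vᵢ ≤ x) = (1 − p^{(x+1)^α})^{βᵢ} for all x ∈ ℕ, and set X₁ = max{V₁, V₃}, X₂ = max{V₂, V₃}. Then for all x₁, x₂ ∈ ℕ the conditional cumulative distribution function F(x₁ | X₂ ≤ x₂) = P(X₁ ≤ x₁, X₂ ≤ x₂) / P(X₂ ≤ x₂) satisfies: (i) if x₁ < x₂, F(x₁ | X₂ ≤ x₂) = (1 − p^{(x₁+1)^α})^{β₁+β₃} · (1 − p^{(x₂+1)^α})^{−β₃}; (ii) if x₂ < x₁, F(x₁ | X₂ ≤ x₂) = (1 − p^{(x₁+1)^α})^{β₁}; (iii) if x₁ = x₂ = x, F(x₁ | X₂ ≤ x₂) = (1 − p^{(x+1)^α})^{β₁}. -/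

import Mathlib

/-!
The event `{X₁ ≤ x₁, X₂ ≤ x₂}` is `{V₁ ≤ x₁, V₂ ≤ x₂, V₃ ≤ min x₁ x₂}`, so by independence the
conditional CDF is `F₁(x₁) F₃(min x₁ x₂) / F₃(x₂)` for any distributions of the `Vᵢ`: the factor
`F₂(x₂)` cancels. For EDW laws with a common `(α, p)` the CDF is exponential in `β`, which gives the
three closed forms.
-/

open MeasureTheory ProbabilityTheory

/-- The CDF of the exponentiated discrete Weibull distribution `EDW(α, p, β)`:
`F_EDW(x; α, p, β) = (1 - p^((x+1)^α))^β`. -/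
noncomputable def edwCDF (α p β : ℝ) (x : ℕ) : ℝ :=
  (1 - p ^ (((x : ℝ) + 1) ^ α)) ^ β

/-- The PMF of the exponentiated discrete Weibull distribution `EDW(α, p, β)`:
`f_EDW(x; α, p, β) = (1 - p^((x+1)^α))^β - (1 - p^(x^α))^β`. -/
noncomputable def edwPMF (α p β : ℝ) (x : ℕ) : ℝ :=
  (1 - p ^ (((x : ℝ) + 1) ^ α)) ^ β - (1 - p ^ ((x : ℝ) ^ α)) ^ β

lemma one_sub_rpow_pos {p t : ℝ} (hp0 : 0 ≤ p) (hp1 : p < 1) (ht : 0 < t) : 0 < 1 - p ^ t :=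
  sub_pos.2 (Real.rpow_lt_one hp0 hp1 ht)

section edwCDF

variable {α p : ℝ}

lemma one_sub_rpow_succ_rpow_pos (hp0 : 0 ≤ p) (hp1 : p < 1) (x : ℕ) :
    0 < 1 - p ^ (((x : ℝ) + 1) ^ α) :=
  one_sub_rpow_pos hp0 hp1 (by positivity)

lemma edwCDF_pos (hp0 : 0 ≤ p) (hp1 : p < 1) (β : ℝ) (x : ℕ) : 0 < edwCDF α p β x :=
  Real.rpow_pos_of_pos (one_sub_rpow_succ_rpow_pos hp0 hp1 x) β

lemma edwCDF_add (hp0 : 0 ≤ p) (hp1 : p < 1) (β γ : ℝ) (x : ℕ) :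
    edwCDF α p (β + γ) x = edwCDF α p β x * edwCDF α p γ x :=
  Real.rpow_add (one_sub_rpow_succ_rpow_pos hp0 hp1 x) β γ

lemma edwCDF_neg (hp0 : 0 ≤ p) (hp1 : p < 1) (β : ℝ) (x : ℕ) :
    edwCDF α p (-β) x = (edwCDF α p β x)⁻¹ :=
  Real.rpow_neg (one_sub_rpow_succ_rpow_pos hp0 hp1 x).le β

end edwCDF

section MaxOfIndependent

variable {Ω α : Type*} {X Y Z : Ω → α}

lemma setOf_max_le_and_max_le [LinearOrder α] (a b : α) :
    {ω | max (X ω) (Z ω) ≤ a ∧ max (Y ω) (Z ω) ≤ b} =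
      X ⁻¹' Set.Iic a ∩ Y ⁻¹' Set.Iic b ∩ Z ⁻¹' Set.Iic (min a b) := by
  ext ω
  simp only [Set.mem_ofPred_eq, Set.mem_inter_iff, Set.mem_preimage, Set.mem_Iic, max_le_iff,
    le_min_iff]
  tauto

variable [MeasurableSpace Ω] {μ : Measure Ω}

lemma ProbabilityTheory.iIndepFun.measure_preimage_inter_preimage_inter_preimage
    [MeasurableSpace α] (h : iIndepFun ![X, Y, Z] μ) {s t u : Set α}
    (hs : MeasurableSet s) (ht : MeasurableSet t) (hu : MeasurableSet u) :
    μ (X ⁻¹' s ∩ Y ⁻¹' t ∩ Z ⁻¹' u) = μ (X ⁻¹' s) * μ (Y ⁻¹' t) * μ (Z ⁻¹' u) := by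
  have key := h.meas_iInter (s := fun i => ![X, Y, Z] i ⁻¹' ![s, t, u] i)
    fun i => ⟨![s, t, u] i, by fin_cases i <;> assumption, rfl⟩
  rw [Fin.prod_univ_three] at key
  have hset : X ⁻¹' s ∩ Y ⁻¹' t ∩ Z ⁻¹' u = ⋂ i, ![X, Y, Z] i ⁻¹' ![s, t, u] i := by
    ext ω
    simp [Fin.forall_fin_succ, and_assoc]
  rw [hset]
  exact key

variable [LinearOrder α] [TopologicalSpace α] [OrderClosedTopology α] [MeasurableSpace α]
  [OpensMeasurableSpace α]

lemma ProbabilityTheory.iIndepFun.toReal_measure_max_le_and_max_le_div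
    (h : iIndepFun ![X, Y, Z] μ) (a b : α) (hY : (μ {ω | Y ω ≤ b}).toReal ≠ 0) :
    (μ {ω | max (X ω) (Z ω) ≤ a ∧ max (Y ω) (Z ω) ≤ b}).toReal /
        (μ {ω | max (Y ω) (Z ω) ≤ b}).toReal =
      (μ {ω | X ω ≤ a}).toReal * (μ {ω | Z ω ≤ min a b}).toReal / (μ {ω | Z ω ≤ b}).toReal := by
  have joint : μ {ω | max (X ω) (Z ω) ≤ a ∧ max (Y ω) (Z ω) ≤ b} =
      μ {ω | X ω ≤ a} * μ {ω | Y ω ≤ b} * μ {ω | Z ω ≤ min a b} := by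
    rw [setOf_max_le_and_max_le]
    exact h.measure_preimage_inter_preimage_inter_preimage
      measurableSet_Iic measurableSet_Iic measurableSet_Iic
  have marginal : μ {ω | max (Y ω) (Z ω) ≤ b} = μ {ω | Y ω ≤ b} * μ {ω | Z ω ≤ b} := by
    simp only [max_le_iff]
    exact (h.indepFun (show (1 : Fin 3) ≠ 2 by decide)).measure_inter_preimage_eq_mul _ _
      measurableSet_Iic measurableSet_Iic
  rw [joint, marginal]
  simp only [ENNReal.toReal_mul]
  rw [mul_right_comm _ (μ {ω | Y ω ≤ b}).toReal, mul_comm (μ {ω | Y ω ≤ b}).toReal,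
    mul_div_mul_right _ _ hY]

end MaxOfIndependent

theorem bdew_conditional_cdf_le_general
    {Ω : Type*} [MeasurableSpace Ω] (μ : Measure Ω)
    (α p β₁ β₂ β₃ : ℝ)
    (hp0 : 0 < p) (hp1 : p < 1)
    (V₁ V₂ V₃ : Ω → ℕ)
    (hindep : iIndepFun ![V₁, V₂, V₃] μ)
    (hcdf₁ : ∀ x : ℕ, (μ {ω | V₁ ω ≤ x}).toReal = edwCDF α p β₁ x)
    (hcdf₂ : ∀ x : ℕ, (μ {ω | V₂ ω ≤ x}).toReal = edwCDF α p β₂ x)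
    (hcdf₃ : ∀ x : ℕ, (μ {ω | V₃ ω ≤ x}).toReal = edwCDF α p β₃ x) :
    ∀ x₁ x₂ : ℕ,
      (x₁ < x₂ →
        (μ {ω | max (V₁ ω) (V₃ ω) ≤ x₁ ∧ max (V₂ ω) (V₃ ω) ≤ x₂}).toReal /
            (μ {ω | max (V₂ ω) (V₃ ω) ≤ x₂}).toReal =
          edwCDF α p (β₁ + β₃) x₁ * (1 - p ^ (((x₂ : ℝ) + 1) ^ α)) ^ (-β₃)) ∧
      (x₂ < x₁ →
        (μ {ω | max (V₁ ω) (V₃ ω) ≤ x₁ ∧ max (V₂ ω) (V₃ ω) ≤ x₂}).toReal /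
            (μ {ω | max (V₂ ω) (V₃ ω) ≤ x₂}).toReal =
          edwCDF α p β₁ x₁) ∧
      (x₁ = x₂ →
        (μ {ω | max (V₁ ω) (V₃ ω) ≤ x₁ ∧ max (V₂ ω) (V₃ ω) ≤ x₂}).toReal /
            (μ {ω | max (V₂ ω) (V₃ ω) ≤ x₂}).toReal =
          edwCDF α p β₁ x₁) := by
  intro x₁ x₂
  have hF : ∀ β x, edwCDF α p β x ≠ 0 := fun β x => (edwCDF_pos hp0.le hp1 β x).ne'
  have cond := hindep.toReal_measure_max_le_and_max_le_div x₁ x₂ (by rw [hcdf₂]; exact hF β₂ x₂)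
  rw [hcdf₁, hcdf₃, hcdf₃] at cond
  refine ⟨fun h => ?_, fun h => ?_, fun h => ?_⟩
  · change _ = _ * edwCDF α p (-β₃) x₂
    rw [cond, min_eq_left h.le, edwCDF_add hp0.le hp1, edwCDF_neg hp0.le hp1, div_eq_mul_inv]
  · rw [cond, min_eq_right h.le, mul_div_cancel_right₀ _ (hF β₃ x₂)]
  · rw [cond, h, min_self, mul_div_cancel_right₀ _ (hF β₃ x₂)]

/-- The conditional CDF of `X₁` given `X₂ ≤ x₂` for the BDEW distribution. -/
theorem bdew_conditional_cdf_le
    {Ω : Type*} [MeasurableSpace Ω] (μ : Measure Ω) [IsProbabilityMeasure μ]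
    (α p β₁ β₂ β₃ : ℝ)
    (hp0 : 0 < p) (hp1 : p < 1) (hα : 0 < α)
    (hβ₁ : 0 < β₁) (hβ₂ : 0 < β₂) (hβ₃ : 0 < β₃)
    (V₁ V₂ V₃ : Ω → ℕ)
    (hm₁ : Measurable V₁) (hm₂ : Measurable V₂) (hm₃ : Measurable V₃)
    (hindep : iIndepFun ![V₁, V₂, V₃] μ)
    (hcdf₁ : ∀ x : ℕ, (μ {ω | V₁ ω ≤ x}).toReal = edwCDF α p β₁ x)
    (hcdf₂ : ∀ x : ℕ, (μ {ω | V₂ ω ≤ x}).toReal = edwCDF α p β₂ x)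
    (hcdf₃ : ∀ x : ℕ, (μ {ω | V₃ ω ≤ x}).toReal = edwCDF α p β₃ x) :
    ∀ x₁ x₂ : ℕ,
      (x₁ < x₂ →
        (μ {ω | max (V₁ ω) (V₃ ω) ≤ x₁ ∧ max (V₂ ω) (V₃ ω) ≤ x₂}).toReal /
            (μ {ω | max (V₂ ω) (V₃ ω) ≤ x₂}).toReal =
          edwCDF α p (β₁ + β₃) x₁ * (1 - p ^ (((x₂ : ℝ) + 1) ^ α)) ^ (-β₃)) ∧
      (x₂ < x₁ →
        (μ {ω | max (V₁ ω) (V₃ ω) ≤ x₁ ∧ max (V₂ ω) (V₃ ω) ≤ x₂}).toReal /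
            (μ {ω | max (V₂ ω) (V₃ ω) ≤ x₂}).toReal =
          edwCDF α p β₁ x₁) ∧
      (x₁ = x₂ →
        (μ {ω | max (V₁ ω) (V₃ ω) ≤ x₁ ∧ max (V₂ ω) (V₃ ω) ≤ x₂}).toReal /
            (μ {ω | max (V₂ ω) (V₃ ω) ≤ x₂}).toReal =
          edwCDF α p β₁ x₁) :=
  bdew_conditional_cdf_le_general μ α p β₁ β₂ β₃ hp0 hp1 V₁ V₂ V₃ hindep hcdf₁ hcdf₂ hcdf₃
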